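/- arXiv:2507.10718 — 4 statements merged into one kernel-verified Lean document; each statement's English description precedes it below -/
import Mathlib

section
/- Let N and d be positive integers, let x_1, …, x_N ∈ ℝ^d, let μ = (1/N)∑_{i=1}^N x_i, and suppose σ ≥ 0 is such that (1/N)∑_{i=1}^N ⟨x_i − μ, u⟩² ≤ σ² for every unit vector u ∈ ℝ^d. Let ζ ≥ 0 and let β_1, …, β_N ∈ ℝ satisfy |β_i| ≤ ζ for all i, and set ν = (1/N)∑_{i=1}^N β_i x_i. Then for every unit vector u ∈ ℝ^d, (1/N)∑_{i=1}^N ⟨β_i x_i − ν, u⟩² ≤ ζ²(σ² + ‖μ‖²). (This is the quantitative content of the paper's Lemma: a stable set under unknown bounded scaling remains stable, with variance proxy ζ²(σ² + ‖μ‖²).) -/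
open Finset
open scoped InnerProductSpace

set_option maxHeartbeats 1600000 in
/-- **Stable set under unknown bounded scaling is stable** (quantitative content).
If the empirical covariance of `x_1, …, x_N` has operator norm at most `σ²`
(expressed via directional second moments about the empirical mean `μ`), and
`|β_i| ≤ ζ` for all `i`, then the empirical covariance of `β_1 x_1, …, β_N x_N`
has operator norm at most `ζ²(σ² + ‖μ‖²)`. -/
theorem stable_under_bounded_scaling
    (N d : ℕ) (hN : 0 < N) (hd : 0 < d)
    (x : Fin N → EuclideanSpace ℝ (Fin d))
    (μ : EuclideanSpace ℝ (Fin d))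
    (hμ : μ = (1 / N : ℝ) • ∑ i, x i)
    (σ : ℝ) (hσ : 0 ≤ σ)
    (hcov : ∀ u : EuclideanSpace ℝ (Fin d), ‖u‖ = 1 →
      (1 / N : ℝ) * ∑ i, ⟪x i - μ, u⟫_ℝ ^ 2 ≤ σ ^ 2)
    (ζ : ℝ) (hζ : 0 ≤ ζ)
    (β : Fin N → ℝ) (hβ : ∀ i, |β i| ≤ ζ)
    (ν : EuclideanSpace ℝ (Fin d))
    (hν : ν = (1 / N : ℝ) • ∑ i, β i • x i) :
    ∀ u : EuclideanSpace ℝ (Fin d), ‖u‖ = 1 →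
      (1 / N : ℝ) * ∑ i, ⟪β i • x i - ν, u⟫_ℝ ^ 2 ≤ ζ ^ 2 * (σ ^ 2 + ‖μ‖ ^ 2) := by
  intro u hu
  have hNpos : (0:ℝ) < N := by exact_mod_cast hN
  set s : Fin N → ℝ := fun i => ⟪x i, u⟫_ℝ with hs
  set t : Fin N → ℝ := fun i => β i * s i with ht
  set m0 : ℝ := ⟪μ, u⟫_ℝ with hm0def
  set m : ℝ := ⟪ν, u⟫_ℝ with hmdef
  have hm0 : (N:ℝ) * m0 = ∑ i, s i := by
    rw [hm0def, hμ, real_inner_smul_left, sum_inner, ← mul_assoc, mul_one_div,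
      div_self hNpos.ne', one_mul]
  have hm : (N:ℝ) * m = ∑ i, t i := by
    rw [hmdef, hν, real_inner_smul_left, sum_inner]
    simp only [real_inner_smul_left]
    rw [← mul_assoc, mul_one_div, div_self hNpos.ne', one_mul]
  have hterm : ∀ i, ⟪β i • x i - ν, u⟫_ℝ = t i - m := by
    intro i
    rw [inner_sub_left, real_inner_smul_left]
  have hterm2 : ∀ i, ⟪x i - μ, u⟫_ℝ = s i - m0 := by
    intro i
    rw [inner_sub_left]
  -- variance identities
  have hvar_t : ∑ i, (t i - m) ^ 2 = (∑ i, (t i) ^ 2) - N * m ^ 2 := by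
    have : ∑ i, (t i - m) ^ 2 = ∑ i, ((t i)^2 - 2 * m * t i + m^2) := by
      apply Finset.sum_congr rfl; intro i _; ring
    rw [this, Finset.sum_add_distrib, Finset.sum_sub_distrib, ← Finset.mul_sum,
      Finset.sum_const, Finset.card_fin, ← hm]
    push_cast
    ring
  have hvar_s : ∑ i, (s i - m0) ^ 2 = (∑ i, (s i) ^ 2) - N * m0 ^ 2 := by
    have : ∑ i, (s i - m0) ^ 2 = ∑ i, ((s i)^2 - 2 * m0 * s i + m0^2) := by
      apply Finset.sum_congr rfl; intro i _; ring
    rw [this, Finset.sum_add_distrib, Finset.sum_sub_distrib, ← Finset.mul_sum,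
      Finset.sum_const, Finset.card_fin, ← hm0]
    push_cast
    ring
  -- termwise bound
  have hts : ∑ i, (t i) ^ 2 ≤ ζ ^ 2 * ∑ i, (s i) ^ 2 := by
    rw [Finset.mul_sum]
    apply Finset.sum_le_sum
    intro i _
    have h1 : (β i)^2 ≤ ζ^2 := by
      have := hβ i
      nlinarith [abs_nonneg (β i), sq_abs (β i)]
    have : (t i)^2 = (β i)^2 * (s i)^2 := by rw [ht]; ring
    rw [this]
    nlinarith [sq_nonneg (s i)]
  have hcovu := hcov u hu
  have hcov' : ∑ i, (s i - m0) ^ 2 ≤ N * σ ^ 2 := by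
    have : (1 / N : ℝ) * ∑ i, (s i - m0) ^ 2 ≤ σ ^ 2 := by
      simpa only [hterm2] using hcovu
    calc ∑ i, (s i - m0) ^ 2 = N * ((1/N : ℝ) * ∑ i, (s i - m0) ^ 2) := by
          rw [← mul_assoc, mul_one_div, div_self hNpos.ne', one_mul]
      _ ≤ N * σ ^ 2 := by nlinarith
  have hm0bd : m0 ^ 2 ≤ ‖μ‖ ^ 2 := by
    have h := abs_real_inner_le_norm μ u
    rw [hu, mul_one] at h
    nlinarith [sq_abs m0, abs_nonneg m0, norm_nonneg μ]
  -- assemble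
  have goal_eq : (1 / N : ℝ) * ∑ i, ⟪β i • x i - ν, u⟫_ℝ ^ 2
      = (1 / N : ℝ) * ∑ i, (t i - m) ^ 2 := by
    simp only [hterm]
  rw [goal_eq]
  have hss : ∑ i, (s i) ^ 2 ≤ N * σ ^ 2 + N * m0 ^ 2 := by linarith [hvar_s ▸ hcov']
  have h1 : ∑ i, (t i - m) ^ 2 ≤ ζ ^ 2 * (N * σ ^ 2 + N * m0 ^ 2) := by
    have hnm : 0 ≤ (N:ℝ) * m ^ 2 := by positivity
    have h3 := mul_le_mul_of_nonneg_left hss (sq_nonneg ζ)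
    linarith [hts]
  have h2 : ζ ^ 2 * (N * σ ^ 2 + N * m0 ^ 2) ≤ N * (ζ ^ 2 * (σ ^ 2 + ‖μ‖ ^ 2)) := by
    have h4 : ζ ^ 2 * (σ ^ 2 + m0 ^ 2) ≤ ζ ^ 2 * (σ ^ 2 + ‖μ‖ ^ 2) :=
      mul_le_mul_of_nonneg_left (by linarith) (sq_nonneg ζ)
    calc ζ ^ 2 * (N * σ ^ 2 + N * m0 ^ 2) = N * (ζ ^ 2 * (σ ^ 2 + m0 ^ 2)) := by ring
      _ ≤ N * (ζ ^ 2 * (σ ^ 2 + ‖μ‖ ^ 2)) := mul_le_mul_of_nonneg_left h4 hNpos.le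
  calc (1 / N : ℝ) * ∑ i, (t i - m) ^ 2
      ≤ (1 / N : ℝ) * (N * (ζ ^ 2 * (σ ^ 2 + ‖μ‖ ^ 2))) := by
        apply mul_le_mul_of_nonneg_left (le_trans h1 h2)
        positivity
    _ = ζ ^ 2 * (σ ^ 2 + ‖μ‖ ^ 2) := by
        rw [← mul_assoc, one_div_mul_cancel hNpos.ne', one_mul]
end

section
/- Let d be a positive integer and let (X, Y) be a random pair with values in ℝ^d × {−1, 1} with law P. Let λ > 0, σ > 0, and B ≥ 0, and assume the anti-concentration condition: for every unit vector v ∈ ℝ^d, P(|⟨v, X⟩| ≤ λσ) ≤ Bλ. Fix w ∈ ℝ^d and assume E[(1 − Y⟨w, X⟩)₊] < ∞. Let w_P be the projection of w onto the Euclidean ball of radius 1/(λσ), i.e., w_P = w if ‖w‖ ≤ 1/(λσ) and w_P = (1/(λσ‖w‖)) w otherwise. Then E[(1 − Y⟨w_P, X⟩)₊] ≤ E[(1 − Y⟨w, X⟩)₊] + 2Bλ. -/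
/-!
Write `wP = c • w` with `c = 1 / (λσ‖w‖) < 1`. Pointwise, shrinking the margin `t = y⟨w, x⟩` to
`c t` can only increase the hinge loss where `|c t| ≤ 1`, and there by at most `2`; elsewhere
either `c t > 1` (zero loss) or `t ≤ c t ≤ 0` (smaller loss). Since `|c t| ≤ 1` says exactly that
`|⟨w / ‖w‖, x⟩| ≤ λσ`, anti-concentration bounds the probability of that event by `Bλ`.
-/

open MeasureTheory
open scoped InnerProductSpace

lemma hinge_mul_le_add_ite {c : ℝ} (hc₀ : 0 ≤ c) (hc₁ : c ≤ 1) (t : ℝ) :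
    max (1 - c * t) 0 ≤ max (1 - t) 0 + if |c * t| ≤ 1 then 2 else 0 := by
  split_ifs with h
  · have := neg_abs_le (c * t)
    exact max_le (by linarith [le_max_right (1 - t) 0]) (by linarith [le_max_right (1 - t) 0])
  · rw [add_zero]
    rcases le_or_gt t 0 with ht | ht
    · exact max_le_max_right 0 (by nlinarith)
    · have : 1 < c * t := by
        rw [abs_of_nonneg (by positivity)] at h
        exact not_le.mp h
      exact max_le (by linarith [le_max_right (1 - t) 0]) (le_max_right _ _)

lemma abs_div_mul_norm_mul_inner_le_one_iff {F : Type*} [NormedAddCommGroup F]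
    [InnerProductSpace ℝ F] {r y : ℝ} (hr : 0 < r) (hy : |y| = 1) (w x : F) :
    |1 / (r * ‖w‖) * (y * ⟪w, x⟫_ℝ)| ≤ 1 ↔ |⟪‖w‖⁻¹ • w, x⟫_ℝ| ≤ r := by
  have : |1 / (r * ‖w‖) * (y * ⟪w, x⟫_ℝ)| = |⟪‖w‖⁻¹ • w, x⟫_ℝ| / r := by
    rw [real_inner_smul_left, abs_mul, abs_mul, abs_mul, hy, abs_inv, abs_div, abs_mul,
      abs_of_pos hr, abs_norm, abs_one]
    ring
  rw [this, div_le_one hr]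

/-- Passing to a measurable hull of `E` makes measurability of `E` (and of `f`) unnecessary. -/
lemma integral_le_integral_add_measureReal {α : Type*} [MeasurableSpace α] {μ : Measure α}
    [IsFiniteMeasure μ] {f g : α → ℝ} {E : Set α} {a : ℝ} (hf : ∀ x, 0 ≤ f x)
    (hg : Integrable g μ) (ha : 0 ≤ a) (hfg : ∀ x, f x ≤ g x + E.indicator (fun _ => a) x) :
    ∫ x, f x ∂μ ≤ ∫ x, g x ∂μ + μ.real E * a := by
  have hE := measurableSet_toMeasurable μ E
  have hind : Integrable ((toMeasurable μ E).indicator fun _ => a) μ :=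
    (integrable_const a).indicator hE
  calc ∫ x, f x ∂μ ≤ ∫ x, g x + (toMeasurable μ E).indicator (fun _ => a) x ∂μ :=
        integral_mono_of_nonneg (.of_forall hf) (hg.add hind) <| .of_forall fun x =>
          (hfg x).trans <| (add_le_add_iff_left _).mpr <|
            Set.indicator_le_indicator_of_subset (subset_toMeasurable μ E) (fun _ => ha) x
    _ = ∫ x, g x ∂μ + μ.real E * a := by
        rw [integral_add hg hind, integral_indicator_const _ hE, smul_eq_mul, measureReal_def,
          measureReal_def, measure_toMeasurable]

theorem hinge_loss_clipping_general
    (Ω : Type*) [MeasurableSpace Ω] (P : Measure Ω) [IsProbabilityMeasure P]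
    (d : ℕ)
    (X : Ω → EuclideanSpace ℝ (Fin d))
    (Y : Ω → ℝ) (hY : ∀ ω, Y ω = -1 ∨ Y ω = 1)
    (lam σ B : ℝ) (hlam : 0 < lam) (hσ : 0 < σ) (hB : 0 ≤ B)
    (hanti : ∀ v : EuclideanSpace ℝ (Fin d), ‖v‖ = 1 →
      (P {ω | |⟪v, X ω⟫_ℝ| ≤ lam * σ}).toReal ≤ B * lam)
    (w : EuclideanSpace ℝ (Fin d))
    (hint : Integrable (fun ω => max (1 - Y ω * ⟪w, X ω⟫_ℝ) 0) P)
    (wP : EuclideanSpace ℝ (Fin d))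
    (hwP : wP = if ‖w‖ ≤ 1 / (lam * σ) then w else (1 / (lam * σ * ‖w‖)) • w) :
    (∫ ω, max (1 - Y ω * ⟪wP, X ω⟫_ℝ) 0 ∂P) ≤
      (∫ ω, max (1 - Y ω * ⟪w, X ω⟫_ℝ) 0 ∂P) + 2 * B * lam := by
  have hr : 0 < lam * σ := mul_pos hlam hσ
  rcases le_or_gt ‖w‖ (1 / (lam * σ)) with hw | hw
  · rw [hwP, if_pos hw]
    linarith [mul_nonneg hB hlam.le]
  have hw₀ : w ≠ 0 := norm_pos_iff.mp ((one_div_pos.mpr hr).trans hw)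
  have hc₁ : 1 / (lam * σ * ‖w‖) ≤ 1 := by
    rw [div_le_one (by positivity)]
    exact ((div_lt_iff₀' hr).mp hw).le
  refine (integral_le_integral_add_measureReal (E := {ω | |⟪‖w‖⁻¹ • w, X ω⟫_ℝ| ≤ lam * σ})
    (fun ω => le_max_right _ _) hint zero_le_two fun ω => ?_).trans ?_
  · have hYω : |Y ω| = 1 := by rcases hY ω with h | h <;> simp [h]
    rw [hwP, if_neg hw.not_ge, real_inner_smul_left, mul_left_comm]
    simpa only [Set.indicator_apply, Set.mem_ofPred_eq,
      abs_div_mul_norm_mul_inner_le_one_iff hr hYω] using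
      hinge_mul_le_add_ite (by positivity) hc₁ (Y ω * ⟪w, X ω⟫_ℝ)
  · have hE := hanti (‖w‖⁻¹ • w) (by simpa using norm_smul_inv_norm (𝕜 := ℝ) hw₀)
    rw [measureReal_def]
    linarith

/-- **Clipping of `w` for hinge loss.** Under the anti-concentration condition
`P(|⟨v, X⟩| ≤ λσ) ≤ Bλ` for all unit vectors `v`, projecting `w` onto the
Euclidean ball of radius `1/(λσ)` increases the expected hinge loss by at most
`2Bλ`. -/
theorem hinge_loss_clipping
    (Ω : Type*) [MeasurableSpace Ω] (P : Measure Ω) [IsProbabilityMeasure P]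
    (d : ℕ) (hd : 0 < d)
    (X : Ω → EuclideanSpace ℝ (Fin d)) (hX : Measurable X)
    (Y : Ω → ℝ) (hYmeas : Measurable Y) (hY : ∀ ω, Y ω = -1 ∨ Y ω = 1)
    (lam σ B : ℝ) (hlam : 0 < lam) (hσ : 0 < σ) (hB : 0 ≤ B)
    (hanti : ∀ v : EuclideanSpace ℝ (Fin d), ‖v‖ = 1 →
      (P {ω | |⟪v, X ω⟫_ℝ| ≤ lam * σ}).toReal ≤ B * lam)
    (w : EuclideanSpace ℝ (Fin d))
    (hint : Integrable (fun ω => max (1 - Y ω * ⟪w, X ω⟫_ℝ) 0) P)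
    (wP : EuclideanSpace ℝ (Fin d))
    (hwP : wP = if ‖w‖ ≤ 1 / (lam * σ) then w else (1 / (lam * σ * ‖w‖)) • w) :
    (∫ ω, max (1 - Y ω * ⟪wP, X ω⟫_ℝ) 0 ∂P) ≤
      (∫ ω, max (1 - Y ω * ⟪w, X ω⟫_ℝ) 0 ∂P) + 2 * B * lam :=
  hinge_loss_clipping_general Ω P d X Y hY lam σ B hlam hσ hB hanti w hint wP hwP
end

section
/- Per-iteration primal descent inequality with an inexact hybrid gradient. Let N and d be positive integers, let E = ℝ^d with the Euclidean inner product ⟨·,·⟩ and norm ‖·‖, let x_1, …, x_N ∈ E, let β ∈ ℝ^N, let Δ ≥ 0, and let z ∈ E satisfy ‖z − (1/N)∑_{i=1}^N β_i x_i‖ ≤ Δ. Let ψ : E → ℝ be convex, let a > 0, γ > 0, and 0 < c' < c, let w_prev ∈ E, and let w_new be a minimizer over u ∈ E of a⟨z, u⟩ + aψ(u) + (c/(2γ))‖u − w_prev‖². Then for every u* ∈ E: (a/N)∑_{i=1}^N β_i⟨x_i, u* − w_new⟩ + a(ψ(u*) − ψ(w_new)) ≥ −(c/(2γ))‖u* −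 w_prev‖² + (c/(2γ))‖w_new − w_prev‖² + (c'/(2γ))‖w_new − u*‖² − a²Δ²γ/(2(c − c')). -/
set_option maxHeartbeats 1000000


open Finset
open scoped InnerProductSpace

/-- **Per-iteration primal descent inequality with an inexact hybrid gradient.**
If `z` approximates the weighted covariate average `(1/N)∑_i β_i x_i` within `Δ`
and `w_new` minimizes `u ↦ a⟨z, u⟩ + aψ(u) + (c/(2γ))‖u − w_prev‖²`, then for
every `u*` the stated lower bound on the primal progress holds. -/
theorem primal_descent_inequality
    (N d : ℕ) (hN : 0 < N) (hd : 0 < d)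
    (x : Fin N → EuclideanSpace ℝ (Fin d))
    (β : Fin N → ℝ) (Δ : ℝ) (hΔ : 0 ≤ Δ)
    (z : EuclideanSpace ℝ (Fin d))
    (hz : ‖z - (1 / N : ℝ) • ∑ i, β i • x i‖ ≤ Δ)
    (ψ : EuclideanSpace ℝ (Fin d) → ℝ) (hψ : ConvexOn ℝ Set.univ ψ)
    (a γ c c' : ℝ) (ha : 0 < a) (hγ : 0 < γ) (hc' : 0 < c') (hcc : c' < c)
    (wprev wnew : EuclideanSpace ℝ (Fin d))
    (hmin : ∀ u : EuclideanSpace ℝ (Fin d),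
      a * ⟪z, wnew⟫_ℝ + a * ψ wnew + (c / (2 * γ)) * ‖wnew - wprev‖ ^ 2 ≤
        a * ⟪z, u⟫_ℝ + a * ψ u + (c / (2 * γ)) * ‖u - wprev‖ ^ 2) :
    ∀ ustar : EuclideanSpace ℝ (Fin d),
      (a / N) * ∑ i, β i * ⟪x i, ustar - wnew⟫_ℝ + a * (ψ ustar - ψ wnew) ≥
        -(c / (2 * γ)) * ‖ustar - wprev‖ ^ 2 + (c / (2 * γ)) * ‖wnew - wprev‖ ^ 2
          + (c' / (2 * γ)) * ‖wnew - ustar‖ ^ 2 - a ^ 2 * Δ ^ 2 * γ / (2 * (c - c')) := by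
  intro ustar
  have hc : 0 < c := lt_trans hc' hcc
  set v : EuclideanSpace ℝ (Fin d) := ustar - wnew with hv
  set g : EuclideanSpace ℝ (Fin d) := (1 / N : ℝ) • ∑ i, β i • x i with hg
  have hC : (0:ℝ) ≤ ‖v‖ ^ 2 := by positivity
  have hcg : (0:ℝ) < c / (2 * γ) := by positivity
  -- sum identity
  have hsum : (a / N) * ∑ i, β i * ⟪x i, v⟫_ℝ = a * ⟪g, v⟫_ℝ := by
    rw [hg, real_inner_smul_left, sum_inner]
    simp only [real_inner_smul_left]
    ring
  -- expansion of the norm of `ustar - wprev`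
  have h1 : ‖ustar - wprev‖ ^ 2
      = ‖wnew - wprev‖ ^ 2 + 2 * ⟪wnew - wprev, v⟫_ℝ + ‖v‖ ^ 2 := by
    have : ustar - wprev = (wnew - wprev) + v := by rw [hv]; abel
    rw [this, norm_add_sq_real]
  -- strong-convexity descent along the segment
  have hA : ∀ t : ℝ, 0 < t → t ≤ 1 →
      (c / (2*γ)) * (1 - t) * ‖v‖ ^ 2 ≤
        a * ⟪z, v⟫_ℝ + a * (ψ ustar - ψ wnew)
          + (c / (2*γ)) * (‖ustar - wprev‖ ^ 2 - ‖wnew - wprev‖ ^ 2) := by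
    intro t ht0 ht1
    have hpt : wnew + t • v = (1 - t) • wnew + t • ustar := by
      rw [hv]; module
    have hψle : ψ (wnew + t • v) ≤ (1 - t) * ψ wnew + t * ψ ustar := by
      rw [hpt]
      exact hψ.2 (Set.mem_univ _) (Set.mem_univ _) (by linarith) ht0.le (by ring)
    have h2 : ‖wnew + t • v - wprev‖ ^ 2
        = ‖wnew - wprev‖ ^ 2 + 2 * (t * ⟪wnew - wprev, v⟫_ℝ) + t ^ 2 * ‖v‖ ^ 2 := by
      have e : wnew + t • v - wprev = (wnew - wprev) + t • v := by abel
      rw [e, norm_add_sq_real, real_inner_smul_right, norm_smul]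
      rw [Real.norm_eq_abs]
      rw [mul_pow, sq_abs]
    have h3 : ⟪z, wnew + t • v⟫_ℝ = ⟪z, wnew⟫_ℝ + t * ⟪z, v⟫_ℝ := by
      rw [inner_add_right, real_inner_smul_right]
    have hm := hmin (wnew + t • v)
    rw [h2, h3] at hm
    -- derive 0 ≤ S where S is the bracketed expression
    have hS : 0 ≤ a * ⟪z, v⟫_ℝ + a * (ψ ustar - ψ wnew)
        + (c / (2*γ)) * (2 * ⟪wnew - wprev, v⟫_ℝ + t * ‖v‖ ^ 2) := by
      have htS : 0 ≤ t * (a * ⟪z, v⟫_ℝ + a * (ψ ustar - ψ wnew)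
          + (c / (2*γ)) * (2 * ⟪wnew - wprev, v⟫_ℝ + t * ‖v‖ ^ 2)) := by
        nlinarith [hm, hψle, ha.le]
      exact nonneg_of_mul_nonneg_right htS ht0
    nlinarith [hS, h1]
  -- limit t → 0 via an ε-argument
  have hkey : (c / (2*γ)) * ‖v‖ ^ 2 ≤
      a * ⟪z, v⟫_ℝ + a * (ψ ustar - ψ wnew)
        + (c / (2*γ)) * (‖ustar - wprev‖ ^ 2 - ‖wnew - wprev‖ ^ 2) := by
    apply le_of_forall_pos_le_add
    intro ε hε
    set K : ℝ := (c / (2*γ)) * ‖v‖ ^ 2 with hK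
    have hK0 : 0 ≤ K := by positivity
    set t : ℝ := min 1 (ε / (K + 1)) with ht
    have ht0 : 0 < t := lt_min one_pos (div_pos hε (by linarith))
    have ht1 : t ≤ 1 := min_le_left _ _
    have hAt := hA t ht0 ht1
    have htK : t * K ≤ ε := by
      have h1 : t ≤ ε / (K + 1) := min_le_right _ _
      have : t * K ≤ (ε / (K + 1)) * K :=
        mul_le_mul_of_nonneg_right h1 hK0
      have h2 : (ε / (K + 1)) * K ≤ ε := by
        rw [div_mul_eq_mul_div, div_le_iff₀ (by linarith : (0:ℝ) < K + 1)]
        nlinarith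
      linarith
    nlinarith [hAt]
  -- replace z by the exact average g
  have hzg : a * ⟪g, v⟫_ℝ ≥ a * ⟪z, v⟫_ℝ - a * Δ * ‖v‖ := by
    have hcs : ⟪z - g, v⟫_ℝ ≤ ‖z - g‖ * ‖v‖ := real_inner_le_norm _ _
    have hzd : ‖z - g‖ * ‖v‖ ≤ Δ * ‖v‖ :=
      mul_le_mul_of_nonneg_right hz (norm_nonneg _)
    have hsplit : ⟪z, v⟫_ℝ = ⟪g, v⟫_ℝ + ⟪z - g, v⟫_ℝ := by
      rw [inner_sub_left]; ring
    nlinarith [ha.le]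
  -- combine everything
  rw [hsum]
  have hnv : ‖wnew - ustar‖ = ‖v‖ := by rw [hv, norm_sub_rev]
  rw [hnv]
  have hamgm : (c / (2*γ)) * ‖v‖ ^ 2 - a * Δ * ‖v‖ ≥
      (c' / (2*γ)) * ‖v‖ ^ 2 - a ^ 2 * Δ ^ 2 * γ / (2 * (c - c')) := by
    have hsq : 0 ≤ ((c - c') * ‖v‖ - a * Δ * γ) ^ 2 := sq_nonneg _
    have hcc0 : 0 < c - c' := by linarith
    rw [ge_iff_le, ← sub_nonneg]
    have heq : c / (2*γ) * ‖v‖ ^ 2 - a * Δ * ‖v‖ -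
        ((c' / (2*γ)) * ‖v‖ ^ 2 - a ^ 2 * Δ ^ 2 * γ / (2 * (c - c'))) =
        ((c - c') * ‖v‖ - a * Δ * γ) ^ 2 / (2 * γ * (c - c')) := by
      field_simp
      ring
    rw [heq]
    positivity
  linarith [hkey, hzg, hamgm]
end

section
/- Let d be a positive integer, let p ≥ 1, ι > 0, C > 0, and ρ > 0 be reals, and let P be a Borel probability measure on ℝ^d × ℝ whose first marginal (the law of the covariate x) is atomless and satisfies ∫ ‖x‖^p dP(x, y) < ∞. Let ℓ : ℝ × ℝ → [0, ∞) be measurable and such that for every y ∈ ℝ, ℓ(y, z)/|z|^{p+ι} → C as |z| → ∞. Fix w ∈ ℝ^d with w ≠ 0. Then for every M ∈ ℝ there exists a Borel measurable map τ : ℝ^d → ℝ^d such that ∫ ‖x − τ(x)‖^p dP(x, y) ≤ ρ^p and ∫ ℓ(y, ⟨w, τ(x)⟩) dP(x, y) ≥ M. (Consequently, the worst-case expected loss over all label-preserving transports of P with p-th transport cost at most ρ^p is +∞; this is the content of the paper's fact that any loss with super-p growth has infinite worst-case Wasserstein-p DRO risk.) -/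
/-!
Translate the covariates lying in a set `A` by `n • u`, where `u` is a unit vector with
`⟪w, u⟫ > 0`. This costs `n ^ p * P(A)`, while by Fatou's lemma and the `|z| ^ (p + ι)` growth of
the loss, the loss of the fully shifted distribution grows faster than any multiple of `n ^ p`.
Since the covariate marginal is atomless, the covariate space is covered by countably many sets of
marginal mass at most `ε / 2`; grouping them greedily gives about `2 / ε` sets of mass at most `ε`,
so for `ε = ρ ^ p / n ^ p` one of them carries at least `M` of the shifted loss.
-/

open MeasureTheory Filter Topology Set
open scoped InnerProductSpace ENNReal

section Pigeonhole

variable {α : Type*} [MeasurableSpace α] {μ ν : Measure α} [IsFiniteMeasure μ] {e : ℕ → Set α}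
  {δ : ℝ} {c : ℝ≥0∞}

theorem measureReal_inter_accumulate_le_of_forall_lt {B : Set α} (heδ : ∀ i, μ.real (e i) ≤ δ)
    {m : ℕ} (hm : ∀ j < m, μ.real (B ∩ accumulate e j) ≤ δ) :
    μ.real (B ∩ accumulate e m) ≤ 2 * δ := by
  cases m with
  | zero =>
    have hδ := measureReal_nonneg.trans (heδ 0)
    calc μ.real (B ∩ accumulate e 0) ≤ μ.real (e 0) := by
          rw [accumulate_zero_nat]; exact measureReal_mono inter_subset_right
      _ ≤ 2 * δ := by linarith [heδ 0]
  | succ j =>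
    calc μ.real (B ∩ accumulate e (j + 1))
        ≤ μ.real (B ∩ accumulate e j ∪ e (j + 1)) := by
          rw [accumulate_succ, inter_union_distrib_left]
          exact measureReal_mono (union_subset_union_right _ inter_subset_right)
      _ ≤ μ.real (B ∩ accumulate e j) + μ.real (e (j + 1)) := measureReal_union_le _ _
      _ ≤ 2 * δ := by linarith [hm j j.lt_succ_self, heδ (j + 1)]

theorem measure_le_of_measureReal_le_of_cover (he : ∀ i, MeasurableSet (e i))
    (hcover : ⋃ i, e i = univ) (heδ : ∀ i, μ.real (e i) ≤ δ)
    (hc : ∀ A, MeasurableSet A → μ.real A ≤ 2 * δ → ν A ≤ c) (k : ℕ) {B : Set α}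
    (hB : MeasurableSet B) (hBk : μ.real B ≤ (k + 1) * δ) : ν B ≤ (k + 1) * c := by
  have hδ : 0 ≤ δ := measureReal_nonneg.trans (heδ 0)
  induction k generalizing B with
  | zero => simpa using hc B hB (by push_cast at hBk; linarith)
  | succ k ih =>
    by_cases hBδ : μ.real B ≤ δ
    · calc ν B ≤ c := hc B hB (by linarith)
        _ ≤ (↑(k + 1) + 1) * c := le_mul_of_one_le_left' le_add_self
    have hex : ∃ m, δ < μ.real (B ∩ accumulate e m) := by
      have hlim : Tendsto (fun m => μ.real (B ∩ accumulate e m)) atTop (𝓝 (μ.real B)) := by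
        have := tendsto_measure_iUnion_atTop (μ := μ)
          (monotone_const.inter monotone_accumulate : Monotone fun m => B ∩ accumulate e m)
        rw [← inter_iUnion, iUnion_accumulate, hcover, inter_univ] at this
        exact (ENNReal.tendsto_toReal (measure_ne_top μ B)).comp this
      exact (hlim.eventually_const_lt (not_le.1 hBδ)).exists
    classical
    -- the first partial union in which `B` has mass above `δ` still has mass at most `2 * δ`
    set m := Nat.find hex
    have hacc : MeasurableSet (accumulate e m) :=
      MeasurableSet.biUnion (to_countable _) fun i _ => he i
    have hsmall : μ.real (B ∩ accumulate e m) ≤ 2 * δ :=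
      measureReal_inter_accumulate_le_of_forall_lt heδ fun j hj => not_lt.1 (Nat.find_min hex hj)
    have hrest : μ.real (B \ accumulate e m) ≤ (k + 1) * δ := by
      have := measureReal_sdiff_add_inter (μ := μ) (s := B) hacc
      have := Nat.find_spec hex
      push_cast at hBk
      linarith
    calc ν B ≤ ν (B ∩ accumulate e m) + ν (B \ accumulate e m) :=
          measure_le_inter_add_sdiff _ _ _
      _ ≤ c + (k + 1) * c := add_le_add (hc _ (hB.inter hacc) hsmall) (ih (hB.diff hacc) hrest)
      _ = (↑(k + 1) + 1) * c := by push_cast; ring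

end Pigeonhole

theorem exists_seq_cover_measureReal_le {X : Type*} [MetricSpace X] [SecondCountableTopology X]
    [MeasurableSpace X] [OpensMeasurableSpace X] [Nonempty X] (μ : Measure X) [IsFiniteMeasure μ]
    [NullSingletonClass μ] {δ : ℝ} (hδ : 0 < δ) :
    ∃ e : ℕ → Set X, (∀ i, MeasurableSet (e i)) ∧ (∀ i, μ.real (e i) ≤ δ) ∧ ⋃ i, e i = univ := by
  have hball : ∀ x, ∃ r > 0, μ.real (Metric.closedBall x r) ≤ δ := by
    intro x
    have hlim := tendsto_measure_cthickening_of_isClosed (μ := μ)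
      ⟨1, one_pos, measure_ne_top μ _⟩ (isClosed_singleton (x := x))
    rw [measure_singleton] at hlim
    obtain ⟨r, hrδ, hr⟩ := (((hlim.mono_left nhdsWithin_le_nhds).eventually_lt_const
      (ENNReal.ofReal_pos.2 hδ)).and (self_mem_nhdsWithin (s := Ioi 0))).exists
    rw [Metric.cthickening_singleton x hr.le] at hrδ
    exact ⟨r, hr, ENNReal.toReal_le_of_le_ofReal hδ.le hrδ.le⟩
  choose r hr hrδ using hball
  obtain ⟨s, hs, hcover⟩ := TopologicalSpace.countable_cover_nhds fun x =>
    Metric.closedBall_mem_nhds x (hr x)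
  have hne : s.Nonempty := by
    obtain ⟨x⟩ := ‹Nonempty X›
    obtain ⟨y, hy, -⟩ := mem_iUnion₂.1 (hcover.symm ▸ mem_univ x)
    exact ⟨y, hy⟩
  obtain ⟨g, rfl⟩ := hs.exists_eq_range hne
  exact ⟨fun i => Metric.closedBall (g i) (r (g i)), fun i => measurableSet_closedBall,
    fun i => hrδ _, by rwa [biUnion_range] at hcover⟩

theorem exists_measurableSet_measure_le_lt {X : Type*} [MetricSpace X] [SecondCountableTopology X]
    [MeasurableSpace X] [OpensMeasurableSpace X] [Nonempty X] (μ ν : Measure X) [IsFiniteMeasure μ]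
    [NullSingletonClass μ] {ε : ℝ} (hε : 0 < ε) {c : ℝ≥0∞}
    (hν : ENNReal.ofReal (2 * μ.real univ / ε + 2) * c < ν univ) :
    ∃ A, MeasurableSet A ∧ μ A ≤ ENNReal.ofReal ε ∧ c < ν A := by
  obtain ⟨e, he, heδ, hcover⟩ := exists_seq_cover_measureReal_le μ (half_pos hε)
  by_contra! hsmall
  set k := ⌈2 * μ.real univ / ε⌉₊
  have hk : 2 * μ.real univ / ε ≤ k := Nat.le_ceil _
  have hk' : (k : ℝ) + 1 ≤ 2 * μ.real univ / ε + 2 := by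
    linarith [Nat.ceil_lt_add_one (by positivity : 0 ≤ 2 * μ.real univ / ε)]
  have huniv : μ.real univ ≤ (k + 1) * (ε / 2) := by
    rw [div_le_iff₀ hε] at hk
    nlinarith
  have hc : ∀ A, MeasurableSet A → μ.real A ≤ 2 * (ε / 2) → ν A ≤ c := fun A hA hμA =>
    hsmall A hA (by rw [← ofReal_measureReal]; exact ENNReal.ofReal_le_ofReal (by linarith))
  refine hν.not_ge ?_
  calc ν univ ≤ (k + 1) * c := measure_le_of_measureReal_le_of_cover he hcover heδ hc k
        MeasurableSet.univ huniv
    _ ≤ ENNReal.ofReal (2 * μ.real univ / ε + 2) * c := by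
      gcongr
      rw [← ENNReal.ofReal_natCast, ← ENNReal.ofReal_one,
        ← ENNReal.ofReal_add (by positivity) zero_le_one]
      exact ENNReal.ofReal_le_ofReal hk'

theorem exists_measure_fst_le_lt_setLIntegral {X Y : Type*} [MetricSpace X]
    [SecondCountableTopology X] [MeasurableSpace X] [OpensMeasurableSpace X] [Nonempty X]
    [MeasurableSpace Y] (P : Measure (X × Y)) [IsFiniteMeasure P]
    [NullSingletonClass (P.map Prod.fst)] (f : X × Y → ℝ≥0∞) {ε : ℝ} (hε : 0 < ε) {c : ℝ≥0∞}
    (hf : ENNReal.ofReal (2 * P.real univ / ε + 2) * c < ∫⁻ ξ, f ξ ∂P) :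
    ∃ A, MeasurableSet A ∧ P.map Prod.fst A ≤ ENNReal.ofReal ε ∧
      c < ∫⁻ ξ in Prod.fst ⁻¹' A, f ξ ∂P := by
  have hmap : ∀ A, MeasurableSet A →
      (P.withDensity f).map Prod.fst A = ∫⁻ ξ in Prod.fst ⁻¹' A, f ξ ∂P := fun A hA => by
    rw [Measure.map_apply measurable_fst hA, withDensity_apply _ (measurable_fst hA)]
  obtain ⟨A, hA, hμA, hνA⟩ := exists_measurableSet_measure_le_lt (P.map Prod.fst)
    ((P.withDensity f).map Prod.fst) hε (c := c) (by
      rwa [hmap _ MeasurableSet.univ, preimage_univ, Measure.restrict_univ,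
        measureReal_def, Measure.map_apply measurable_fst MeasurableSet.univ, preimage_univ])
  exact ⟨A, hA, hμA, hmap A hA ▸ hνA⟩

theorem tendsto_comp_add_mul_div_rpow_atTop {g : ℝ → ℝ} {p ι C : ℝ} (hι : 0 < ι) (hC : 0 < C)
    (hg : Tendsto (fun z => g z / |z| ^ (p + ι)) (cocompact ℝ) (𝓝 C)) (a : ℝ) {b : ℝ}
    (hb : 0 < b) :
    Tendsto (fun t : ℝ => g (a + t * b) / t ^ p) atTop atTop := by
  have hz : Tendsto (fun t : ℝ => a + t * b) atTop atTop :=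
    tendsto_atTop_add_const_left _ a (tendsto_id.atTop_mul_const hb)
  have hslope : Tendsto (fun t : ℝ => |a + t * b| / t) atTop (𝓝 b) := by
    have : Tendsto (fun t : ℝ => a / t + b) atTop (𝓝 b) := by
      simpa using (tendsto_const_nhds.div_atTop tendsto_id).add_const b
    refine this.congr' ?_
    filter_upwards [hz.eventually_gt_atTop 0, eventually_gt_atTop 0] with t hzt ht
    rw [abs_of_pos hzt]
    field_simp
  have hgrowth : Tendsto (fun t : ℝ => (|a + t * b| / t) ^ p * |a + t * b| ^ ι) atTop atTop :=
    (hslope.rpow_const (Or.inl hb.ne')).pos_mul_atTop (Real.rpow_pos_of_pos hb p)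
      ((tendsto_rpow_atTop hι).comp (tendsto_abs_atTop_atTop.comp hz))
  refine ((hg.comp (hz.mono_right atTop_le_cocompact)).pos_mul_atTop hC hgrowth).congr' ?_
  filter_upwards [hz.eventually_gt_atTop 0, eventually_gt_atTop 0] with t hzt ht
  have hzt' : 0 < |a + t * b| := abs_pos.2 hzt.ne'
  simp only [Function.comp_apply]
  rw [Real.div_rpow hzt'.le ht.le, Real.rpow_add hzt']
  field_simp

theorem tendsto_lintegral_top_of_forall_tendsto_top {α ι : Type*} [MeasurableSpace α]
    {μ : Measure α} [NeZero μ] {l : Filter ι} [l.NeBot] [IsCountablyGenerated l]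
    {F : ι → α → ℝ≥0∞}
    (hF : ∀ i, AEMeasurable (F i) μ) (h : ∀ x, Tendsto (F · x) l (𝓝 ⊤)) :
    Tendsto (fun i => ∫⁻ x, F i x ∂μ) l (𝓝 ⊤) := by
  refine tendsto_of_le_liminf_of_limsup_le ?_ le_top
  calc ⊤ = ∫⁻ x, liminf (F · x) l ∂μ := by
        simp [fun x => (h x).liminf_eq, ENNReal.top_mul (NeZero.ne (μ univ))]
    _ ≤ liminf (fun i => ∫⁻ x, F i x ∂μ) l := lintegral_liminf_le' hF

theorem eventually_mul_rpow_lt_lintegral_shift {Ω : Type*} [MeasurableSpace Ω] (P : Measure Ω)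
    [NeZero P] {ℓ : ℝ → ℝ → ℝ} (hmeas : Measurable fun q : ℝ × ℝ => ℓ q.1 q.2) {p ι C : ℝ}
    (hι : 0 < ι) (hC : 0 < C)
    (hlim : ∀ y, Tendsto (fun z => ℓ y z / |z| ^ (p + ι)) (cocompact ℝ) (𝓝 C))
    {y a : Ω → ℝ} (hy : Measurable y) (ha : Measurable a) {b : ℝ} (hb : 0 < b)
    {K : ℝ≥0∞} (hK : K ≠ ⊤) :
    ∀ᶠ n : ℕ in atTop, K * ENNReal.ofReal ((n : ℝ) ^ p) <
      ∫⁻ ω, ENNReal.ofReal (ℓ (y ω) (a ω + n * b)) ∂P := by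
  set G : ℕ → Ω → ℝ≥0∞ := fun n ω => ENNReal.ofReal (ℓ (y ω) (a ω + n * b) / (n : ℝ) ^ p)
  have hGm : ∀ n, Measurable (G n) := fun n =>
    ENNReal.measurable_ofReal.comp ((hmeas.comp (hy.prodMk (ha.add_const _))).div_const _)
  have hGtop : ∀ ω, Tendsto (G · ω) atTop (𝓝 ⊤) := fun ω =>
    ENNReal.tendsto_ofReal_atTop.comp <|
      (tendsto_comp_add_mul_div_rpow_atTop hι hC (hlim (y ω)) (a ω) hb).comp
        tendsto_natCast_atTop_atTop
  filter_upwards [(tendsto_lintegral_top_of_forall_tendsto_top (μ := P)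
    (fun n => (hGm n).aemeasurable) hGtop).eventually_const_lt hK.lt_top,
    eventually_gt_atTop 0] with n hn hn0
  have hnp : 0 < (n : ℝ) ^ p := Real.rpow_pos_of_pos (Nat.cast_pos.2 hn0) p
  calc K * ENNReal.ofReal ((n : ℝ) ^ p) < (∫⁻ ω, G n ω ∂P) * ENNReal.ofReal ((n : ℝ) ^ p) :=
        ENNReal.mul_lt_mul_left (by simpa using hnp) ENNReal.ofReal_ne_top hn
    _ = ∫⁻ ω, ENNReal.ofReal (ℓ (y ω) (a ω + n * b)) ∂P := by
      rw [← lintegral_mul_const _ (hGm n)]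
      refine lintegral_congr fun ω => ?_
      rw [← ENNReal.ofReal_mul' hnp.le, div_mul_cancel₀ _ hnp.ne']

section Translation

variable {E Y : Type*} [MeasurableSpace E] [MeasurableSpace Y] (P : Measure (E × Y))
  {A : Set E} [DecidablePred (· ∈ A)]

theorem lintegral_rpow_norm_sub_piecewise_add [NormedAddCommGroup E] (hA : MeasurableSet A)
    (v : E) {p : ℝ} (hp : 0 < p) :
    ∫⁻ ξ, ENNReal.ofReal (‖ξ.1 - A.piecewise (· + v) id ξ.1‖ ^ p) ∂P =
      ENNReal.ofReal (‖v‖ ^ p) * P.map Prod.fst A := by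
  rw [Measure.map_apply measurable_fst hA, ← lintegral_indicator_const (measurable_fst hA)]
  refine lintegral_congr fun ξ => ?_
  by_cases hξ : ξ.1 ∈ A
  · simp [hξ]
  · simp [hξ, Real.zero_rpow hp.ne']

theorem setLIntegral_add_le_lintegral_piecewise_add [Add E] (hA : MeasurableSet A) (v : E)
    (F : E → Y → ℝ≥0∞) :
    ∫⁻ ξ in Prod.fst ⁻¹' A, F (ξ.1 + v) ξ.2 ∂P ≤ ∫⁻ ξ, F (A.piecewise (· + v) id ξ.1) ξ.2 ∂P :=
  calc ∫⁻ ξ in Prod.fst ⁻¹' A, F (ξ.1 + v) ξ.2 ∂P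
      = ∫⁻ ξ in Prod.fst ⁻¹' A, F (A.piecewise (· + v) id ξ.1) ξ.2 ∂P :=
        setLIntegral_congr_fun (measurable_fst hA) fun ξ hξ => by
          rw [piecewise_eq_of_mem _ _ _ (show ξ.1 ∈ A from hξ)]
    _ ≤ _ := setLIntegral_le_lintegral _ _

end Translation

theorem exists_norm_eq_one_inner_pos {E : Type*} [NormedAddCommGroup E] [InnerProductSpace ℝ E]
    {w : E} (hw : w ≠ 0) : ∃ u : E, ‖u‖ = 1 ∧ 0 < ⟪w, u⟫_ℝ :=
  ⟨‖w‖⁻¹ • w, norm_smul_inv_norm hw, by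
    rw [real_inner_smul_right, real_inner_self_eq_norm_sq]; positivity⟩

theorem wasserstein_dro_superlinear_growth_unbounded_general
    (d : ℕ) (p ι C ρ : ℝ) (hp : 1 ≤ p) (hι : 0 < ι) (hC : 0 < C) (hρ : 0 < ρ)
    (P : Measure (EuclideanSpace ℝ (Fin d) × ℝ)) [IsProbabilityMeasure P]
    (hatomless : NoAtoms (P.map Prod.fst))
    (ℓ : ℝ → ℝ → ℝ)
    (hmeas : Measurable fun q : ℝ × ℝ => ℓ q.1 q.2)
    (hlim : ∀ y : ℝ,
      Tendsto (fun z : ℝ => ℓ y z / |z| ^ (p + ι)) (cocompact ℝ) (nhds C))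
    (w : EuclideanSpace ℝ (Fin d)) (hw : w ≠ 0) :
    ∀ M : ℝ, ∃ τ : EuclideanSpace ℝ (Fin d) → EuclideanSpace ℝ (Fin d),
      Measurable τ ∧
      (∫⁻ ξ, ENNReal.ofReal (‖ξ.1 - τ ξ.1‖ ^ p) ∂P) ≤ ENNReal.ofReal (ρ ^ p) ∧
      ENNReal.ofReal M ≤ ∫⁻ ξ, ENNReal.ofReal (ℓ ξ.2 ⟪w, τ ξ.1⟫_ℝ) ∂P := by
  intro M
  classical
  have : NullSingletonClass (P.map Prod.fst) := hatomless
  obtain ⟨u, hu, hwu⟩ := exists_norm_eq_one_inner_pos hw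
  obtain ⟨n, hn, hloss⟩ := ((eventually_ge_atTop 1).and (eventually_mul_rpow_lt_lintegral_shift P
    hmeas hι hC hlim measurable_snd ((measurable_const (a := w)).inner measurable_fst) hwu
    (K := ENNReal.ofReal (2 / ρ ^ p + 2) * ENNReal.ofReal M) (by finiteness))).exists
  have hnp : 1 ≤ (n : ℝ) ^ p := Real.one_le_rpow (by exact_mod_cast hn) (by linarith)
  have hbudget : 2 * P.real univ / (ρ ^ p / n ^ p) + 2 ≤ (2 / ρ ^ p + 2) * n ^ p := by
    rw [probReal_univ, div_div_eq_mul_div, add_mul, mul_div_right_comm]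
    linarith
  obtain ⟨A, hA, hμA, hνA⟩ := exists_measure_fst_le_lt_setLIntegral P _ (ε := ρ ^ p / n ^ p)
    (by positivity) (c := ENNReal.ofReal M) <| by
      calc _ ≤ ENNReal.ofReal ((2 / ρ ^ p + 2) * n ^ p) * ENNReal.ofReal M := by gcongr
        _ = ENNReal.ofReal (2 / ρ ^ p + 2) * ENNReal.ofReal M * ENNReal.ofReal ((n : ℝ) ^ p) := by
            rw [ENNReal.ofReal_mul (by positivity), mul_right_comm]
        _ < _ := hloss
  refine ⟨A.piecewise (· + (n : ℝ) • u) id,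
    (measurable_id.add_const _).piecewise hA measurable_id, ?_, ?_⟩
  · rw [lintegral_rpow_norm_sub_piecewise_add P hA _ (by linarith), norm_smul, hu, mul_one,
      Real.norm_natCast]
    calc _ ≤ ENNReal.ofReal ((n : ℝ) ^ p) * ENNReal.ofReal (ρ ^ p / n ^ p) := by gcongr
      _ = ENNReal.ofReal (ρ ^ p) := by rw [← ENNReal.ofReal_mul (by positivity)]; field_simp
  · refine hνA.le.trans (le_of_eq_of_le ?_ (setLIntegral_add_le_lintegral_piecewise_add P hA
      ((n : ℝ) • u) fun x y => ENNReal.ofReal (ℓ y ⟪w, x⟫_ℝ)))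
    simp [inner_add_right, real_inner_smul_right]

/-- **Super-`p` growth implies infinite worst-case Wasserstein-`p` DRO risk.**
If the covariate marginal of `P` is atomless with finite `p`-th moment, the
nonnegative loss `ℓ(y, z)` grows like `C|z|^{p+ι}` as `|z| → ∞`, and `w ≠ 0`,
then for every `M` there is a measurable label-preserving transport map `τ`
of `p`-th cost at most `ρ^p` under which the expected loss is at least `M`. -/
theorem wasserstein_dro_superlinear_growth_unbounded
    (d : ℕ) (hd : 0 < d) (p ι C ρ : ℝ) (hp : 1 ≤ p) (hι : 0 < ι) (hC : 0 < C) (hρ : 0 < ρ)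
    (P : Measure (EuclideanSpace ℝ (Fin d) × ℝ)) [IsProbabilityMeasure P]
    (hatomless : NoAtoms (P.map Prod.fst))
    (hmom : (∫⁻ ξ, ENNReal.ofReal (‖ξ.1‖ ^ p) ∂P) < ⊤)
    (ℓ : ℝ → ℝ → ℝ)
    (hmeas : Measurable fun q : ℝ × ℝ => ℓ q.1 q.2)
    (hnonneg : ∀ y z, 0 ≤ ℓ y z)
    (hlim : ∀ y : ℝ,
      Tendsto (fun z : ℝ => ℓ y z / |z| ^ (p + ι)) (cocompact ℝ) (nhds C))
    (w : EuclideanSpace ℝ (Fin d)) (hw : w ≠ 0) :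
    ∀ M : ℝ, ∃ τ : EuclideanSpace ℝ (Fin d) → EuclideanSpace ℝ (Fin d),
      Measurable τ ∧
      (∫⁻ ξ, ENNReal.ofReal (‖ξ.1 - τ ξ.1‖ ^ p) ∂P) ≤ ENNReal.ofReal (ρ ^ p) ∧
      ENNReal.ofReal M ≤ ∫⁻ ξ, ENNReal.ofReal (ℓ ξ.2 ⟪w, τ ξ.1⟫_ℝ) ∂P :=
  wasserstein_dro_superlinear_growth_unbounded_general d p ι C ρ hp hι hC hρ P hatomless ℓ hmeas
    hlim w hw
end
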